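/- Let Q ⊆ ℝ^d be compact and convex, let h_1, ..., h_n be open half-spaces whose union covers Q, and suppose the cover is minimal (for each i there is a point p_i ∈ Q covered by h_i and no other h_j). Then n ≤ d+1. -/

import Mathlib

/-!
If the witness points `p i` were affinely dependent, Radon's theorem would split them into two
parts `I`, `Iᶜ` whose convex hulls share a point `x ∈ Q`. Some `h i` covers `x`, and one of the
two parts avoids `i`; its points lie in the convex complement of `h i`, hence so does `x`.
So the witnesses are affinely independent, and there are at most `d + 1` of them.
-/

open Set

theorem convex_compl_setOf_sum_mul_lt {𝕜 ι : Type*} [Field 𝕜] [LinearOrder 𝕜]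
    [IsStrictOrderedRing 𝕜] [Fintype ι] (a : ι → 𝕜) (c : 𝕜) :
    Convex 𝕜 {x : ι → 𝕜 | ∑ k, a k * x k < c}ᶜ := by
  simp only [compl_ofPred, not_lt]
  exact convex_halfSpace_ge (dotProductBilin (A := 𝕜) 𝕜 𝕜 a).isLinear c

theorem affineIndependent_of_minimal_cover {𝕜 ι E : Type*} [Field 𝕜] [LinearOrder 𝕜]
    [IsStrictOrderedRing 𝕜] [AddCommGroup E] [Module 𝕜 E] {Q : Set E} (hQ : Convex 𝕜 Q)
    {h : ι → Set E} (hh : ∀ i, Convex 𝕜 (h i)ᶜ) (hcov : Q ⊆ ⋃ i, h i) {p : ι → E}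
    (hpQ : ∀ i, p i ∈ Q) (hp : ∀ i j, j ≠ i → p i ∉ h j) : AffineIndependent 𝕜 p := by
  by_contra hdep
  obtain ⟨I, x, hxI, hxIc⟩ := Convex.radon_partition hdep
  have hxQ : x ∈ Q :=
    convexHull_min ((image_subset_range p I).trans (range_subset_iff.2 hpQ)) hQ hxI
  obtain ⟨i, hxi⟩ := mem_iUnion.1 (hcov hxQ)
  have not_mem_hull : ∀ S : Set ι, i ∉ S → x ∉ convexHull 𝕜 (p '' S) := by
    rintro S hiS hxS
    refine convexHull_min ?_ (hh i) hxS hxi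
    rintro _ ⟨j, hjS, rfl⟩
    exact hp j i (ne_of_mem_of_not_mem hjS hiS).symm
  by_cases hiI : i ∈ I
  · exact not_mem_hull Iᶜ (not_not_intro hiI) hxIc
  · exact not_mem_hull I hiI hxI

theorem AffineIndependent.card_le_finrank_add_one {𝕜 ι V : Type*} [DivisionRing 𝕜]
    [AddCommGroup V] [Module 𝕜 V] [FiniteDimensional 𝕜 V] [Fintype ι] {p : ι → V}
    (hp : AffineIndependent 𝕜 p) : Fintype.card ι ≤ Module.finrank 𝕜 V + 1 :=
  hp.card_le_finrank_succ.trans (Nat.add_le_add_right (Submodule.finrank_le _) 1)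

theorem stmt_19_general (d n : ℕ) (Q : Set (Fin d → ℝ))
    (hQconv : Convex ℝ Q)
    (a : Fin n → (Fin d → ℝ)) (c : Fin n → ℝ)
    (hcov : Q ⊆ ⋃ i, {x : Fin d → ℝ | ∑ k, a i k * x k < c i})
    (p : Fin n → (Fin d → ℝ))
    (hpQ : ∀ i, p i ∈ Q)
    (hpuniq : ∀ i j, j ≠ i → ¬ (∑ k, a j k * p i k < c j)) :
    n ≤ d + 1 := by
  have hp : AffineIndependent ℝ p :=
    affineIndependent_of_minimal_cover hQconv
      (fun i => convex_compl_setOf_sum_mul_lt (a i) (c i)) hcov hpQ hpuniq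
  simpa using hp.card_le_finrank_add_one

theorem stmt_19 (d n : ℕ) (Q : Set (Fin d → ℝ))
    (hQc : IsCompact Q) (hQconv : Convex ℝ Q)
    (a : Fin n → (Fin d → ℝ)) (c : Fin n → ℝ) (ha : ∀ i, a i ≠ 0)
    (hcov : Q ⊆ ⋃ i, {x : Fin d → ℝ | ∑ k, a i k * x k < c i})
    (p : Fin n → (Fin d → ℝ))
    (hpQ : ∀ i, p i ∈ Q)
    (hpi : ∀ i, ∑ k, a i k * p i k < c i)
    (hpuniq : ∀ i j, j ≠ i → ¬ (∑ k, a j k * p i k < c j)) :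
    n ≤ d + 1 :=
  stmt_19_general d n Q hQconv a c hcov p hpQ hpuniq
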